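/- The sequence ᾱ_m/m converges as m → ∞, its limit is finite, and the limit equals sup_{m≥1} ᾱ_m/m. -/

import Mathlib

open Filter Finset

/-- A letter of the alphabet `{1,2,3}`. -/
abbrev Letter := Fin 3

/-- A word: a finite (possibly empty) sequence of letters. -/
abbrev Word := List Letter

/-- Adjacency of two words: `σ ≠ τ`, and writing `σ = β ++ σ'`, `τ = β ++ τ'` with `β`
the longest common prefix, either one of `σ'`, `τ'` is empty and the other uses at most two
distinct letters, or `σ' = i j^k` and `τ' = j i^{k'}` for distinct letters `i ≠ j`. -/
def WordAdj (σ τ : Word) : Prop :=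
  σ ≠ τ ∧ ∃ β σ' τ' : Word,
    σ = β ++ σ' ∧ τ = β ++ τ' ∧
    ((σ' = [] ∧ τ'.toFinset.card ≤ 2) ∨
     (τ' = [] ∧ σ'.toFinset.card ≤ 2) ∨
     (∃ (i j : Letter) (k k' : ℕ), i ≠ j ∧
        σ' = i :: List.replicate k j ∧ τ' = j :: List.replicate k' i))

/-- The graph `G_t`: vertices are the words of length at most `t` (all other words are
isolated), with adjacency `WordAdj`. -/
def Gt (t : ℕ) : SimpleGraph Word where
  Adj σ τ := σ.length ≤ t ∧ τ.length ≤ t ∧ WordAdj σ τ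
  symm := by
    refine ⟨?_⟩
    rintro σ τ ⟨h1, h2, hne, β, σ', τ', e1, e2, h3⟩
    refine ⟨h2, h1, hne.symm, β, τ', σ', e2, e1, ?_⟩
    rcases h3 with h | h | ⟨i, j, k, k', hij, hs, ht⟩
    · exact Or.inr (Or.inl h)
    · exact Or.inl h
    · exact Or.inr (Or.inr ⟨j, i, k', k, hij.symm, ht, hs⟩)
  loopless := ⟨fun σ h => h.2.2.1 rfl⟩

/-- `dW t σ τ` is the geodesic distance `d_t(σ,τ)` in the graph `G_t`. -/
noncomputable def dW (t : ℕ) (σ τ : Word) : ℕ := (Gt t).dist σ τ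

/-- Length of the longest suffix of `σ` using at most two distinct letters. -/
def suffLen (σ : Word) : ℕ :=
  Nat.findGreatest (fun m => (σ.drop (σ.length - m)).toFinset.card ≤ 2) σ.length

/-- `fW σ = τ₂` where `σ = τ₂τ₁` and `τ₁` is the longest suffix of `σ` using at most two
distinct letters; `fW [] = []`. -/
def fW (σ : Word) : Word := σ.take (σ.length - suffLen σ)

/-- `ω(σ)`: the least `n ≥ 0` with `f^[n] σ = ∅`. -/
noncomputable def omegaW (σ : Word) : ℕ := sInf {n : ℕ | fW^[n] σ = []}

/-- `L(σ) = d_{|σ|}(σ, ∅) - 1` for nonempty `σ`, and `L(∅) = 0`. -/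
noncomputable def Lw (σ : Word) : ℕ := if σ = [] then 0 else dW σ.length σ [] - 1

/-- `ᾱ_m`: the average of `L` over the `3^m` words of length `m`. -/
noncomputable def alphaBar (m : ℕ) : ℝ :=
  (∑ v : Fin m → Letter, (Lw (List.ofFn v) : ℝ)) / 3 ^ m

/-- `α* = sup_{m ≥ 1} ᾱ_m / m`. -/
noncomputable def alphaStar : ℝ :=
  sSup {x : ℝ | ∃ m : ℕ, 1 ≤ m ∧ x = alphaBar m / m}

/-- `#V_t = (3^{t+1} - 1)/2`, the number of vertices of `G_t`, as a real number. -/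
noncomputable def Nv (t : ℕ) : ℝ := ((3 : ℝ) ^ (t + 1) - 1) / 2

/-- The sum of `d_t(σ,τ)` over all ordered pairs of words `σ, τ ∈ V_t`
(twice the sum over unordered pairs of distinct words). -/
noncomputable def pairSum (t : ℕ) : ℝ :=
  ∑ k ∈ range (t + 1), ∑ l ∈ range (t + 1),
    ∑ v : Fin k → Letter, ∑ w : Fin l → Letter,
      (dW t (List.ofFn v) (List.ofFn w) : ℝ)

/-- The average path length `D̄(t)` of `G_t`. -/
noncomputable def Dbar (t : ℕ) : ℝ := pairSum t / (Nv t * (Nv t - 1))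

/-- `κ_t = (Σ_{σ ∈ V_t} L(σ)) / #V_t`. -/
noncomputable def kappa (t : ℕ) : ℝ :=
  (∑ k ∈ range (t + 1), ∑ v : Fin k → Letter, (Lw (List.ofFn v) : ℝ)) / Nv t

/-- `π_t`: the sum of `d_t(σ,τ)` over unordered pairs of distinct `σ, τ ∈ V_t`. -/
noncomputable def piT (t : ℕ) : ℝ := pairSum t / 2

/-- `μ_t`: the sum of `d_t(σ,τ)` over unordered pairs of distinct `σ, τ ∈ V_t`
having the same first letter. -/
noncomputable def muT (t : ℕ) : ℝ :=
  (∑ i : Letter, ∑ k ∈ range t, ∑ l ∈ range t,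
    ∑ v : Fin k → Letter, ∑ w : Fin l → Letter,
      (dW t (i :: List.ofFn v) (i :: List.ofFn w) : ℝ)) / 2

/-- `λ_t = Σ_{σ ∈ V_t, σ ≠ ∅} d_t(σ, ∅)`. -/
noncomputable def lambdaT (t : ℕ) : ℝ :=
  ∑ k ∈ Finset.Icc 1 t, ∑ v : Fin k → Letter, (dW t (List.ofFn v) [] : ℝ)

/-- `ν_t = Σ_{i<j} Σ_{|σ'|,|τ'| ≤ t-1} d_t(iσ', jτ')`. -/
noncomputable def nuT (t : ℕ) : ℝ :=
  ∑ i : Letter, ∑ j : Letter,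
    if i < j then
      ∑ k ∈ range t, ∑ l ∈ range t,
        ∑ v : Fin k → Letter, ∑ w : Fin l → Letter,
          (dW t (i :: List.ofFn v) (j :: List.ofFn w) : ℝ)
    else 0

/-- `IsNormalDecomp σ τs`: `τs = [τ₁, …, τ_l]` (with `l ≥ 1`) is a normal decomposition
of `σ`: `σ = τ₁⋯τ_l`; `#τ₁ ≤ 2`, `|τ₁| ≥ 1`; `#τ_i = 2`, `|τ_i| ≥ 2` for `i ≥ 2`; and for
`i < l` the last letter of `τ_i` is the unique letter of the alphabet not appearing
in `τ_{i+1}`. -/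
def IsNormalDecomp (σ : Word) (τs : List Word) : Prop :=
  σ = τs.flatten ∧ τs ≠ [] ∧
  (∀ i : Fin τs.length,
    (i.1 = 0 → 1 ≤ (τs.get i).length ∧ (τs.get i).toFinset.card ≤ 2) ∧
    (1 ≤ i.1 → 2 ≤ (τs.get i).length ∧ (τs.get i).toFinset.card = 2)) ∧
  (∀ i : ℕ, ∀ h : i + 1 < τs.length,
    ∃ c : Letter, (τs.get ⟨i, Nat.lt_of_succ_lt h⟩).getLast? = some c ∧
      c ∉ (τs.get ⟨i + 1, h⟩).toFinset ∧
      ∀ c' : Letter, c' ∉ (τs.get ⟨i + 1, h⟩).toFinset → c' = c)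

/-- `W_{k₁⋯k_l}`: the number of words of length `k₁ + ⋯ + k_l` admitting a normal
decomposition into blocks of lengths `k₁, …, k_l`. -/
noncomputable def Wcount (ks : List ℕ) : ℕ :=
  Nat.card {σ : Word // ∃ τs : List Word, IsNormalDecomp σ τs ∧ τs.map List.length = ks}

/-- `Ē(t) = 3^{-t} Σ_{q ≥ 1} Σ_{k₁ ≥ 1, k₂,…,k_q ≥ 2, k₁+⋯+k_q = t} (q-1)·W_{k₁⋯k_q}`. -/
noncomputable def Ebar (t : ℕ) : ℝ :=
  ((∑ c : Composition t,
      if ∀ i ∈ c.blocks.tail, 2 ≤ i then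
        (c.blocks.length - 1) * Wcount c.blocks
      else 0 : ℕ) : ℝ) / 3 ^ t

/-!
Let `b(σ)` be the least number of factors, each using at most two distinct letters, into which `σ`
can be cut. Every edge of `G_t` changes `b` by at most one and deleting the last factor is an edge,
so `d_t(σ, ∅) = b(σ)` and `L = b - 1` on nonempty words. Cutting a factorisation of `στ` at the
junction splits at most one factor, so `b(σ) + b(τ) ≤ b(στ) + 1`: `L` is superadditive under
concatenation, hence so is `m ↦ ᾱ_m`, while `L(σ) ≤ |σ|` gives `ᾱ_m / m ≤ 1`. Fekete's lemma
concludes.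
-/

open Set SimpleGraph

theorem List.exists_flatten_eq_of_append_eq_flatten {α : Type*} :
    ∀ (τs : List (List α)) {σ τ : List α}, σ ++ τ = τs.flatten →
      ∃ τs₁ τs₂ : List (List α), τs₁.flatten = σ ∧ τs₂.flatten = τ ∧
        τs₁.length + τs₂.length ≤ τs.length + 1 ∧ ∀ u ∈ τs₁ ++ τs₂, ∃ v ∈ τs, u <:+: v
  | [], σ, τ, h => by
    obtain ⟨rfl, rfl⟩ := List.append_eq_nil_iff.1 h
    exact ⟨[], [], rfl, rfl, by simp, by simp⟩
  | v :: τs, σ, τ, h => by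
    rcases List.append_eq_append_iff.1 h with ⟨w, rfl, rfl⟩ | ⟨w, rfl, hw⟩
    · refine ⟨[σ], w :: τs, by simp, rfl, by simp; omega, ?_⟩
      simp only [List.singleton_append, List.mem_cons, exists_eq_or_imp]
      rintro u (rfl | rfl | hu)
      · exact Or.inl (List.prefix_append u w).isInfix
      · exact Or.inl (List.suffix_append σ u).isInfix
      · exact Or.inr ⟨u, hu, List.infix_refl u⟩
    · obtain ⟨τs₁, τs₂, rfl, rfl, hlen, hsub⟩ :=
        List.exists_flatten_eq_of_append_eq_flatten τs hw.symm
      refine ⟨v :: τs₁, τs₂, by simp, rfl, by simp; omega, ?_⟩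
      simp only [List.cons_append, List.mem_cons, exists_eq_or_imp]
      rintro u (rfl | hu)
      · exact Or.inl (List.infix_refl u)
      · exact Or.inr (hsub u hu)

section BlockNum

variable {α : Type*} [DecidableEq α]

def IsTwoLetterFactorization (σ : List α) (τs : List (List α)) : Prop :=
  τs.flatten = σ ∧ ∀ τ ∈ τs, τ.toFinset.card ≤ 2

noncomputable def blockNum (σ : List α) : ℕ :=
  sInf {n | ∃ τs, IsTwoLetterFactorization σ τs ∧ τs.length = n}

theorem card_toFinset_le_of_infix {τ τ' : List α} (h : τ' <:+: τ) :
    τ'.toFinset.card ≤ τ.toFinset.card :=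
  Finset.card_le_card fun _ hx => List.mem_toFinset.2 (h.subset (List.mem_toFinset.1 hx))

theorem card_toFinset_cons_replicate_le_two (i j : α) (k : ℕ) :
    (i :: List.replicate k j).toFinset.card ≤ 2 :=
  (Finset.card_le_card (t := {i, j}) fun x hx => by
    simp only [List.mem_toFinset, List.mem_cons, List.mem_replicate] at hx
    rcases hx with rfl | ⟨-, rfl⟩ <;> simp).trans (Finset.card_le_two)

theorem isTwoLetterFactorization_singletons (σ : List α) :
    IsTwoLetterFactorization σ (σ.map fun a => [a]) := by
  refine ⟨?_, by simp⟩
  induction σ with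
  | nil => rfl
  | cons a σ ih => simp [ih]

theorem blockNum_le {σ : List α} {τs : List (List α)} (h : IsTwoLetterFactorization σ τs) :
    blockNum σ ≤ τs.length :=
  Nat.sInf_le ⟨τs, h, rfl⟩

theorem exists_isTwoLetterFactorization_length_eq_blockNum (σ : List α) :
    ∃ τs, IsTwoLetterFactorization σ τs ∧ τs.length = blockNum σ :=
  Nat.sInf_mem (s := {n | ∃ τs, IsTwoLetterFactorization σ τs ∧ τs.length = n})
    ⟨_, _, isTwoLetterFactorization_singletons σ, rfl⟩

theorem blockNum_le_length (σ : List α) : blockNum σ ≤ σ.length := by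
  simpa using blockNum_le (isTwoLetterFactorization_singletons σ)

@[simp]
theorem blockNum_nil : blockNum ([] : List α) = 0 :=
  Nat.le_zero.1 (blockNum_le (τs := []) ⟨rfl, by simp⟩)

theorem one_le_blockNum {σ : List α} (hσ : σ ≠ []) : 1 ≤ blockNum σ := by
  obtain ⟨τs, ⟨rfl, -⟩, hlen⟩ := exists_isTwoLetterFactorization_length_eq_blockNum σ
  rw [← hlen, Nat.one_le_iff_ne_zero]
  rintro h
  simp [List.length_eq_zero_iff.1 h] at hσ

theorem blockNum_le_one {σ : List α} (h : σ.toFinset.card ≤ 2) : blockNum σ ≤ 1 :=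
  blockNum_le (τs := [σ]) ⟨by simp, by simpa using h⟩

theorem blockNum_append_le (σ τ : List α) : blockNum (σ ++ τ) ≤ blockNum σ + blockNum τ := by
  obtain ⟨τs₁, ⟨rfl, h₁⟩, hl₁⟩ := exists_isTwoLetterFactorization_length_eq_blockNum σ
  obtain ⟨τs₂, ⟨rfl, h₂⟩, hl₂⟩ := exists_isTwoLetterFactorization_length_eq_blockNum τ
  rw [← hl₁, ← hl₂, ← List.length_append]
  exact blockNum_le ⟨by simp, fun τ hτ => (List.mem_append.1 hτ).elim (h₁ τ) (h₂ τ)⟩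

theorem blockNum_add_blockNum_le (σ τ : List α) :
    blockNum σ + blockNum τ ≤ blockNum (σ ++ τ) + 1 := by
  obtain ⟨τs, ⟨hflat, hτs⟩, hlen⟩ := exists_isTwoLetterFactorization_length_eq_blockNum (σ ++ τ)
  obtain ⟨τs₁, τs₂, rfl, rfl, hlen', hsub⟩ :=
    List.exists_flatten_eq_of_append_eq_flatten τs hflat.symm
  have hgood : ∀ u ∈ τs₁ ++ τs₂, u.toFinset.card ≤ 2 := fun u hu => by
    obtain ⟨v, hv, huv⟩ := hsub u hu
    exact (card_toFinset_le_of_infix huv).trans (hτs v hv)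
  have h₁ := blockNum_le (σ := τs₁.flatten) ⟨rfl, fun u hu => hgood u (by simp [hu])⟩
  have h₂ := blockNum_le (σ := τs₂.flatten) ⟨rfl, fun u hu => hgood u (by simp [hu])⟩
  omega

theorem blockNum_le_blockNum_append (σ τ : List α) : blockNum σ ≤ blockNum (σ ++ τ) := by
  rcases eq_or_ne τ [] with rfl | hτ
  · simp
  · have := blockNum_add_blockNum_le σ τ
    have := one_le_blockNum hτ
    omega

end BlockNum

theorem blockNum_le_succ_of_wordAdj {σ τ : Word} (h : WordAdj σ τ) :
    blockNum τ ≤ blockNum σ + 1 := by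
  obtain ⟨-, β, σ', τ', rfl, rfl, ⟨rfl, hτ'⟩ | ⟨rfl, -⟩ | ⟨i, j, k, k', -, rfl, rfl⟩⟩ := h
  · have := blockNum_append_le β τ'
    have := blockNum_le_one hτ'
    simp only [List.append_nil]
    omega
  · simpa using (blockNum_le_blockNum_append β σ').trans (Nat.le_succ _)
  · have := blockNum_append_le β (j :: List.replicate k' i)
    have := blockNum_le_one (card_toFinset_cons_replicate_le_two j i k')
    have := blockNum_le_blockNum_append β (i :: List.replicate k j)
    omega

theorem Gt.blockNum_le_add_length {t : ℕ} {σ τ : Word} (p : (Gt t).Walk σ τ) :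
    blockNum σ ≤ blockNum τ + p.length := by
  induction p with
  | nil => simp
  | cons h p ih =>
    have := blockNum_le_succ_of_wordAdj (h.symm.2.2)
    simp only [Walk.length_cons]
    omega

theorem Gt.adj_append_self {t : ℕ} {β γ : Word} (hγ : γ ≠ []) (hγ₂ : γ.toFinset.card ≤ 2)
    (hlen : (β ++ γ).length ≤ t) : (Gt t).Adj (β ++ γ) β := by
  refine ⟨hlen, ?_, by simpa using hγ, β, γ, [], rfl, by simp, Or.inr (Or.inl ⟨rfl, hγ₂⟩)⟩
  simp only [List.length_append] at hlen
  omega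

theorem Gt.exists_walk_append_flatten_length_le {t : ℕ} :
    ∀ (τs : List Word) (β : Word), (∀ τ ∈ τs, τ.toFinset.card ≤ 2) →
      (β ++ τs.flatten).length ≤ t → ∃ p : (Gt t).Walk (β ++ τs.flatten) β, p.length ≤ τs.length
  | [], β, _, _ => ⟨Walk.nil.copy (List.append_nil β).symm rfl, by simp⟩
  | γ :: τs, β, hτs, hlen => by
    simp only [List.forall_mem_cons] at hτs
    rw [List.flatten_cons, ← List.append_assoc] at hlen ⊢
    obtain ⟨p, hp⟩ := Gt.exists_walk_append_flatten_length_le τs (β ++ γ) hτs.2 hlen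
    rcases eq_or_ne γ [] with rfl | hγ
    · exact ⟨p.copy rfl (List.append_nil β), by simp; omega⟩
    · have hadj : (Gt t).Adj (β ++ γ) β :=
        Gt.adj_append_self hγ hτs.1 (by simp only [List.length_append] at hlen ⊢; omega)
      exact ⟨p.concat hadj, by simp; omega⟩

theorem Gt.dist_nil_eq_blockNum {t : ℕ} {σ : Word} (hσ : σ.length ≤ t) :
    (Gt t).dist σ [] = blockNum σ := by
  obtain ⟨τs, ⟨rfl, hτs⟩, hlen⟩ := exists_isTwoLetterFactorization_length_eq_blockNum σ
  obtain ⟨p, hp⟩ := Gt.exists_walk_append_flatten_length_le τs [] hτs hσ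
  obtain ⟨q, hq⟩ := p.reachable.exists_walk_length_eq_dist
  have := Gt.blockNum_le_add_length q
  have := dist_le p
  simp only [List.nil_append, blockNum_nil] at *
  omega

theorem Lw_eq_blockNum_sub_one (σ : Word) : Lw σ = blockNum σ - 1 := by
  unfold Lw dW
  split_ifs with hσ
  · simp [hσ]
  · rw [Gt.dist_nil_eq_blockNum le_rfl]

theorem Lw_add_Lw_le_Lw_append (σ τ : Word) : Lw σ + Lw τ ≤ Lw (σ ++ τ) := by
  rcases eq_or_ne σ [] with rfl | hσ
  · simp [Lw]
  rcases eq_or_ne τ [] with rfl | hτ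
  · simp [Lw]
  have := blockNum_add_blockNum_le σ τ
  have := one_le_blockNum hσ
  have := one_le_blockNum hτ
  simp only [Lw_eq_blockNum_sub_one]
  omega

theorem Lw_le_length (σ : Word) : Lw σ ≤ σ.length := by
  rw [Lw_eq_blockNum_sub_one]
  exact (Nat.sub_le _ _).trans (blockNum_le_length σ)

theorem sum_ofFn_fin_add {α β : Type*} [Fintype α] [AddCommMonoid β] (f : List α → β)
    (m n : ℕ) :
    ∑ u : Fin (m + n) → α, f (List.ofFn u)
      = ∑ v : Fin m → α, ∑ w : Fin n → α, f (List.ofFn v ++ List.ofFn w) := by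
  rw [← Fintype.sum_prod_type']
  exact (Fintype.sum_equiv (Fin.appendEquiv m n) _ _ fun p => by
    simp [Fin.appendEquiv, List.ofFn_fin_append]).symm

theorem alphaBar_add_le (m n : ℕ) : alphaBar m + alphaBar n ≤ alphaBar (m + n) := by
  have hsum : (∑ v : Fin m → Letter, (Lw (List.ofFn v) : ℝ)) * 3 ^ n
      + (∑ w : Fin n → Letter, (Lw (List.ofFn w) : ℝ)) * 3 ^ m
      ≤ ∑ u : Fin (m + n) → Letter, (Lw (List.ofFn u) : ℝ) := by
    calc _ = ∑ v : Fin m → Letter, ∑ w : Fin n → Letter,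
            ((Lw (List.ofFn v) : ℝ) + Lw (List.ofFn w)) := by
          simp [Finset.sum_add_distrib, Finset.mul_sum, mul_comm]
      _ ≤ _ := by
          rw [sum_ofFn_fin_add (fun σ => (Lw σ : ℝ))]
          gcongr with v _ w _
          exact_mod_cast Lw_add_Lw_le_Lw_append _ _
  unfold alphaBar
  rw [pow_add, div_add_div _ _ (by positivity) (by positivity)]
  gcongr
  linarith

theorem alphaBar_le (m : ℕ) : alphaBar m ≤ m := by
  rw [alphaBar, div_le_iff₀ (by positivity)]
  calc ∑ v : Fin m → Letter, (Lw (List.ofFn v) : ℝ) ≤ ∑ _v : Fin m → Letter, (m : ℝ) := by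
        gcongr with v
        exact_mod_cast (Lw_le_length (List.ofFn v)).trans_eq (List.length_ofFn)
    _ = m * 3 ^ m := by simp [mul_comm]

theorem tendsto_div_sSup_of_superadditive {u : ℕ → ℝ} (hu : ∀ m n, u m + u n ≤ u (m + n))
    (hbdd : BddAbove (range fun n => u n / n)) :
    Tendsto (fun n => u n / n) atTop (nhds (sSup ((fun n : ℕ => u n / n) '' Ici 1))) := by
  have hsub : Subadditive (-u) := fun m n => by simp only [Pi.neg_apply]; linarith [hu m n]
  have hbdd' : BddBelow (range fun n => (-u) n / n) := by
    obtain ⟨C, hC⟩ := hbdd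
    refine ⟨-C, ?_⟩
    rintro _ ⟨n, rfl⟩
    have := hC ⟨n, rfl⟩
    simp only [Pi.neg_apply, neg_div]
    linarith
  have hlim : hsub.lim = -sSup ((fun n : ℕ => u n / n) '' Ici 1) := by
    rw [Subadditive.lim, ← Real.sInf_neg, ← Set.image_neg_eq_neg, Set.image_image]
    simp [neg_div]
  simpa [hlim, neg_div] using (hsub.tendsto_lim hbdd').neg

/-- The sequence `ᾱ_m/m` converges as `m → ∞`, its limit is finite, and the limit equals
`sup_{m ≥ 1} ᾱ_m/m`. -/
theorem alphaBar_div_tendsto_sup :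
    BddAbove {x : ℝ | ∃ m : ℕ, 1 ≤ m ∧ x = alphaBar m / m} ∧
    Tendsto (fun m : ℕ => alphaBar m / m) atTop
      (nhds (sSup {x : ℝ | ∃ m : ℕ, 1 ≤ m ∧ x = alphaBar m / m})) := by
  have hset : {x : ℝ | ∃ m : ℕ, 1 ≤ m ∧ x = alphaBar m / m}
      = (fun m : ℕ => alphaBar m / m) '' Ici 1 := by
    ext x
    simp [eq_comm]
  have hbdd : BddAbove (range fun m : ℕ => alphaBar m / m) := ⟨1, by
    rintro _ ⟨m, rfl⟩
    exact div_le_one_of_le₀ (alphaBar_le m) m.cast_nonneg⟩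
  rw [hset]
  exact ⟨hbdd.mono (image_subset_range _ _),
    tendsto_div_sSup_of_superadditive alphaBar_add_le hbdd⟩
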